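/- Let s0,…,s4 be the Bäcklund transformations of the A7^(2) system and define S0 := s0∘s1, S1 := s2, S2 := s3, S3 := s4. Let Φ_ε denote the change of parameters and variables α0 = 1/ε + A0, α1 = −1/ε, α2 = A1, α3 = A2, α4 = A3, t = T/ε, x = εX, y = Y/ε, z = √ε·Z, w = W/√ε. Then: (i) each S_i acts on the new parameters (A0,A1,A2,A3) as a reflection (its action on (A0,A1,A2,A3) does not involve ε); and (ii) the transformation S_i conjugated by Φ_ε, i.e. expressed in the variables (X,Y,Z,W,T) and parameters (A0,A1,A2,A3), converges pointwise as ε → 0 to the corresponding generator S_i of the W(C3^(1)) Bäcklund transformation group of the C3^(1) system, namely S0: (X,Y,Z,W,T;A) ↦ (−(X+A0/Y+1/Y²), −Y, √(−1)·Z, W/√(−1), −T; −A0, A1+A0, A2, A3), S1: (X, Y−A1/X, Z, W, T; A0+2A1, −A1, A2+A1, A3), S2: (X+A2/(Y+W²−T), Y, Z+2A2W/(Y+W²−T), W, T; A0, A1+A2, −A2, A3+2A2), S3: (X, Y, Z, W−A3/Z, T; A0, A1, A2+A3, −A3). -/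

import Mathlib

/-! For `δ ≠ 0` each conjugated transformation is an explicit expression in `δ`. For `S2` and `S3`
it does not involve `δ` at all. For `S0` the poles of order `δ⁻²` coming from `α0` and
`α1 = -1/δ²` cancel, leaving `-X - (A0 Y + 1)/(Y (Y - δ²))`; for `S1` only powers of `1 - A1 δ²`
survive. Both are continuous at `δ = 0`, where they take the values of the `C3^(1)` transformations.

`δ'` in `PhiInv δ'` is a square root of `-1/α1` after the transformation, chosen so that the
`Z`- and `W`-coordinates stay finite. -/

open Complex Filter Topology

/-- state of the A7^(2) system: variables (x,y,z,w,t) and parameters (α0,…,α4). -/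
abbrev StA7 := (ℂ × ℂ × ℂ × ℂ × ℂ) × (ℂ × ℂ × ℂ × ℂ × ℂ)

/-- state of the C3^(1) system: variables (X,Y,Z,W,T) and parameters (A0,…,A3). -/
abbrev StC3 := (ℂ × ℂ × ℂ × ℂ × ℂ) × (ℂ × ℂ × ℂ × ℂ)

noncomputable def s0A7 : StA7 → StA7
  | ((x, y, z, w, t), (a0, a1, a2, a3, a4)) =>
    ((x + a0/(y-1), y, z, w, t), (-a0, a1, a2+a0, a3, a4))

noncomputable def s1A7 : StA7 → StA7
  | ((x, y, z, w, t), (a0, a1, a2, a3, a4)) =>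
    ((x + a1/y, y, z, w, t), (a0, -a1, a2+a1, a3, a4))

noncomputable def s2A7 : StA7 → StA7
  | ((x, y, z, w, t), (a0, a1, a2, a3, a4)) =>
    ((x, y - a2/x, z, w, t), (a0+a2, a1+a2, -a2, a3+a2, a4))

noncomputable def s3A7 : StA7 → StA7
  | ((x, y, z, w, t), (a0, a1, a2, a3, a4)) =>
    ((x + a3/(y + w^2 - t), y, z + 2*a3*w/(y + w^2 - t), w, t),
      (a0, a1, a2+a3, -a3, a4+2*a3))

noncomputable def s4A7 : StA7 → StA7
  | ((x, y, z, w, t), (a0, a1, a2, a3, a4)) =>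
    ((x, y, z, w - a4/z, t), (a0, a1, a2, a3+a4, -a4))

/-- The substitution Φ (with ε = δ²). -/
noncomputable def Phi (δ : ℂ) : StC3 → StA7
  | ((X, Y, Z, W, T), (A0, A1, A2, A3)) =>
    ((δ^2*X, Y/δ^2, δ*Z, W/δ, T/δ^2), (1/δ^2 + A0, -(1/δ^2), A1, A2, A3))

/-- Recovering the C3^(1) data from an A7^(2) state, using the square root `δ'`
of `−1/α1`. -/
noncomputable def PhiInv (δ' : ℂ) : StA7 → StC3
  | ((x, y, z, w, t), (a0, a1, a2, a3, a4)) =>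
    ((-(a1*x), -(y/a1), z/δ', δ'*w, -(t/a1)), (a0 + a1, a2, a3, a4))

noncomputable def S0C3 : StC3 → StC3
  | ((X, Y, Z, W, T), (A0, A1, A2, A3)) =>
    ((-(X + A0/Y + 1/Y^2), -Y, I*Z, W/I, -T), (-A0, A1+A0, A2, A3))

noncomputable def S1C3 : StC3 → StC3
  | ((X, Y, Z, W, T), (A0, A1, A2, A3)) =>
    ((X, Y - A1/X, Z, W, T), (A0+2*A1, -A1, A2+A1, A3))

noncomputable def S2C3 : StC3 → StC3
  | ((X, Y, Z, W, T), (A0, A1, A2, A3)) =>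
    ((X + A2/(Y + W^2 - T), Y, Z + 2*A2*W/(Y + W^2 - T), W, T),
      (A0, A1+A2, -A2, A3+2*A2))

noncomputable def S3C3 : StC3 → StC3
  | ((X, Y, Z, W, T), (A0, A1, A2, A3)) =>
    ((X, Y, Z, W - A3/Z, T), (A0, A1, A2+A3, -A3))

theorem tendsto_nhdsWithin_of_eventuallyEq_of_continuousAt {α β : Type*} [TopologicalSpace α]
    [TopologicalSpace β] {f g : α → β} {s : Set α} {a : α} (hfg : ∀ᶠ x in 𝓝[s] a, f x = g x)
    (hg : ContinuousAt g a) : Tendsto f (𝓝[s] a) (𝓝 (g a)) :=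
  (hg.tendsto.mono_left nhdsWithin_le_nhds).congr' (hfg.mono fun _ h => h.symm)

section

variable {δ : ℂ}

theorem PhiInv_s3A7_Phi (hδ : δ ≠ 0) (p : StC3) : PhiInv δ (s3A7 (Phi δ p)) = S2C3 p := by
  obtain ⟨⟨X, Y, Z, W, T⟩, A0, A1, A2, A3⟩ := p
  have hden : Y/δ^2 + (W/δ)^2 - T/δ^2 = (Y + W^2 - T)/δ^2 := by ring
  simp only [Phi, s3A7, PhiInv, S2C3, hden, Prod.mk.injEq]
  field_simp
  simp

theorem PhiInv_s4A7_Phi (hδ : δ ≠ 0) (p : StC3) : PhiInv δ (s4A7 (Phi δ p)) = S3C3 p := by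
  obtain ⟨⟨X, Y, Z, W, T⟩, A0, A1, A2, A3⟩ := p
  simp only [Phi, s4A7, PhiInv, S3C3, Prod.mk.injEq]
  field_simp
  simp

theorem snd_PhiInv_s1A7_s0A7_Phi (δ' : ℂ) (hδ : δ ≠ 0) (p : StC3) :
    (PhiInv δ' (s1A7 (s0A7 (Phi δ p)))).2 = (S0C3 p).2 := by
  obtain ⟨⟨X, Y, Z, W, T⟩, A0, A1, A2, A3⟩ := p
  simp only [Phi, s0A7, s1A7, PhiInv, S0C3, Prod.mk.injEq]
  field_simp
  simp only [neg_add_rev, neg_add_cancel_right, and_true, true_and]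
  ring

variable {X Y Z W T A0 A1 A2 A3 : ℂ}

theorem PhiInv_s1A7_s0A7_Phi (hδ : δ ≠ 0) (hY : Y ≠ 0) (hYδ : Y - δ^2 ≠ 0) :
    PhiInv (-(I*δ)) (s1A7 (s0A7 (Phi δ ((X,Y,Z,W,T),(A0,A1,A2,A3))))) =
      ((-X - (A0*Y + 1)/(Y*(Y - δ^2)), -Y, I*Z, W/I, -T), (-A0, A1+A0, A2, A3)) := by
  have hy : Y/δ^2 - 1 = (Y - δ^2)/δ^2 := by field_simp
  simp only [Phi, s0A7, s1A7, PhiInv, hy, Prod.mk.injEq]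
  field_simp
  simp only [I_sq, true_and, and_true]
  refine ⟨⟨?_, ?_, ?_⟩, ?_, ?_⟩ <;> ring

theorem PhiInv_s2A7_Phi (hδ : δ ≠ 0) :
    PhiInv (δ * (1 - A1*δ^2) ^ (-(1:ℂ)/2)) (s2A7 (Phi δ ((X,Y,Z,W,T),(A0,A1,A2,A3)))) =
      (((1 - A1*δ^2)*X, (Y - A1/X)/(1 - A1*δ^2), Z/(1 - A1*δ^2) ^ (-(1:ℂ)/2),
        (1 - A1*δ^2) ^ (-(1:ℂ)/2) * W, T/(1 - A1*δ^2)), (A0+2*A1, -A1, A2+A1, A3)) := by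
  have ha1 : -(1/δ^2) + A1 = -((1 - A1*δ^2)/δ^2) := by field_simp; ring
  simp only [Phi, s2A7, PhiInv, ha1, Prod.mk.injEq]
  by_cases hc : 1 - A1*δ^2 = 0
  · -- both sides are junk values: `δ' = 0` and every division is by zero
    simp only [hc, zero_cpow (by norm_num : -(1:ℂ)/2 ≠ 0), zero_div, div_zero, neg_zero, zero_mul,
      mul_zero, add_zero, true_and, and_true]
    field_simp
    linear_combination hc
  · field_simp
    simp only [and_self, neg_sub, and_true, true_and]
    ring

theorem tendsto_PhiInv_s1A7_s0A7_Phi (hY : Y ≠ 0) :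
    Tendsto (fun δ => PhiInv (-(I*δ)) (s1A7 (s0A7 (Phi δ ((X,Y,Z,W,T),(A0,A1,A2,A3))))))
      (𝓝[≠] 0) (𝓝 (S0C3 ((X,Y,Z,W,T),(A0,A1,A2,A3)))) := by
  set g : ℂ → StC3 := fun δ =>
    ((-X - (A0*Y + 1)/(Y*(Y - δ^2)), -Y, I*Z, W/I, -T), (-A0, A1+A0, A2, A3))
  have hg : ContinuousAt g 0 := by fun_prop (disch := simpa using hY)
  have hg0 : g 0 = S0C3 ((X,Y,Z,W,T),(A0,A1,A2,A3)) := by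
    simp only [g, S0C3]
    congr 2
    rw [zero_pow two_ne_zero, sub_zero]
    field_simp
    ring
  have hYδ : ∀ᶠ δ in 𝓝[≠] 0, Y - δ^2 ≠ 0 :=
    eventually_nhdsWithin_of_eventually_nhds <|
      (continuous_const.sub (continuous_pow 2)).continuousAt.eventually_ne (by simpa using hY)
  rw [← hg0]
  refine tendsto_nhdsWithin_of_eventuallyEq_of_continuousAt ?_ hg
  filter_upwards [self_mem_nhdsWithin, hYδ] with δ hδ hYδ
  exact PhiInv_s1A7_s0A7_Phi hδ hY hYδ

theorem tendsto_PhiInv_s2A7_Phi :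
    Tendsto (fun δ => PhiInv (δ * (1 - A1*δ^2) ^ (-(1:ℂ)/2))
        (s2A7 (Phi δ ((X,Y,Z,W,T),(A0,A1,A2,A3)))))
      (𝓝[≠] 0) (𝓝 (S1C3 ((X,Y,Z,W,T),(A0,A1,A2,A3)))) := by
  set g : ℂ → StC3 := fun δ =>
    (((1 - A1*δ^2)*X, (Y - A1/X)/(1 - A1*δ^2), Z/(1 - A1*δ^2) ^ (-(1:ℂ)/2),
        (1 - A1*δ^2) ^ (-(1:ℂ)/2) * W, T/(1 - A1*δ^2)), (A0+2*A1, -A1, A2+A1, A3))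
  have hg : ContinuousAt g 0 := by fun_prop (disch := simp)
  have hg0 : g 0 = S1C3 ((X,Y,Z,W,T),(A0,A1,A2,A3)) := by simp [g, S1C3]
  rw [← hg0]
  exact tendsto_nhdsWithin_of_eventuallyEq_of_continuousAt
    (eventually_nhdsWithin_of_forall fun _ hδ => PhiInv_s2A7_Phi hδ) hg

end

theorem degeneration_backlund_A7_to_C3_general (A0 A1 A2 A3 : ℂ)
    (X Y Z W T : ℂ) :
    -- (i) exact reflection action on the parameters (A0,A1,A2,A3)
    (∀ δ : ℂ, δ ≠ 0 →
      (PhiInv (-(I*δ)) (s1A7 (s0A7 (Phi δ ((X,Y,Z,W,T),(A0,A1,A2,A3)))))).2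
        = (-A0, A1+A0, A2, A3) ∧
      (PhiInv (δ * (1 - A1*δ^2) ^ (-(1:ℂ)/2))
          (s2A7 (Phi δ ((X,Y,Z,W,T),(A0,A1,A2,A3))))).2
        = (A0+2*A1, -A1, A2+A1, A3) ∧
      (PhiInv δ (s3A7 (Phi δ ((X,Y,Z,W,T),(A0,A1,A2,A3))))).2
        = (A0, A1+A2, -A2, A3+2*A2) ∧
      (PhiInv δ (s4A7 (Phi δ ((X,Y,Z,W,T),(A0,A1,A2,A3))))).2
        = (A0, A1, A2+A3, -A3)) ∧
    -- (ii) pointwise convergence, as δ → 0, to the C3^(1) Bäcklund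
    -- transformations S0, S1, S2, S3
    (Y ≠ 0 →
      Tendsto
        (fun δ : ℂ =>
          PhiInv (-(I*δ)) (s1A7 (s0A7 (Phi δ ((X,Y,Z,W,T),(A0,A1,A2,A3))))))
        (𝓝[≠] 0)
        (𝓝 (((-(X + A0/Y + 1/Y^2), -Y, I*Z, W/I, -T),
              (-A0, A1+A0, A2, A3)) : StC3))) ∧
    (X ≠ 0 →
      Tendsto
        (fun δ : ℂ =>
          PhiInv (δ * (1 - A1*δ^2) ^ (-(1:ℂ)/2))
            (s2A7 (Phi δ ((X,Y,Z,W,T),(A0,A1,A2,A3)))))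
        (𝓝[≠] 0)
        (𝓝 (((X, Y - A1/X, Z, W, T), (A0+2*A1, -A1, A2+A1, A3)) : StC3))) ∧
    (Y + W^2 - T ≠ 0 →
      Tendsto
        (fun δ : ℂ =>
          PhiInv δ (s3A7 (Phi δ ((X,Y,Z,W,T),(A0,A1,A2,A3)))))
        (𝓝[≠] 0)
        (𝓝 (((X + A2/(Y + W^2 - T), Y, Z + 2*A2*W/(Y + W^2 - T), W, T),
              (A0, A1+A2, -A2, A3+2*A2)) : StC3))) ∧
    (Z ≠ 0 →
      Tendsto
        (fun δ : ℂ =>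
          PhiInv δ (s4A7 (Phi δ ((X,Y,Z,W,T),(A0,A1,A2,A3)))))
        (𝓝[≠] 0)
        (𝓝 (((X, Y, Z, W - A3/Z, T), (A0, A1, A2+A3, -A3)) : StC3))) := by
  refine ⟨fun δ hδ => ⟨?_, ?_, ?_, ?_⟩, fun hY => tendsto_PhiInv_s1A7_s0A7_Phi hY,
    fun _ => tendsto_PhiInv_s2A7_Phi, fun _ => ?_, fun _ => ?_⟩
  · exact snd_PhiInv_s1A7_s0A7_Phi _ hδ _
  · rw [PhiInv_s2A7_Phi hδ]
  · rw [PhiInv_s3A7_Phi hδ]; rfl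
  · rw [PhiInv_s4A7_Phi hδ]; rfl
  · exact tendsto_const_nhds.congr'
      (eventually_nhdsWithin_of_forall fun _ hδ => (PhiInv_s3A7_Phi hδ _).symm)
  · exact tendsto_const_nhds.congr'
      (eventually_nhdsWithin_of_forall fun _ hδ => (PhiInv_s4A7_Phi hδ _).symm)

theorem degeneration_backlund_A7_to_C3 (A0 A1 A2 A3 : ℂ)
    (hrel : A0 + 2*A1 + 2*A2 + A3 = 1)
    (X Y Z W T : ℂ) :
    -- (i) exact reflection action on the parameters (A0,A1,A2,A3)
    (∀ δ : ℂ, δ ≠ 0 →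
      (PhiInv (-(I*δ)) (s1A7 (s0A7 (Phi δ ((X,Y,Z,W,T),(A0,A1,A2,A3)))))).2
        = (-A0, A1+A0, A2, A3) ∧
      (PhiInv (δ * (1 - A1*δ^2) ^ (-(1:ℂ)/2))
          (s2A7 (Phi δ ((X,Y,Z,W,T),(A0,A1,A2,A3))))).2
        = (A0+2*A1, -A1, A2+A1, A3) ∧
      (PhiInv δ (s3A7 (Phi δ ((X,Y,Z,W,T),(A0,A1,A2,A3))))).2
        = (A0, A1+A2, -A2, A3+2*A2) ∧
      (PhiInv δ (s4A7 (Phi δ ((X,Y,Z,W,T),(A0,A1,A2,A3))))).2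
        = (A0, A1, A2+A3, -A3)) ∧
    -- (ii) pointwise convergence, as δ → 0, to the C3^(1) Bäcklund
    -- transformations S0, S1, S2, S3
    (Y ≠ 0 →
      Tendsto
        (fun δ : ℂ =>
          PhiInv (-(I*δ)) (s1A7 (s0A7 (Phi δ ((X,Y,Z,W,T),(A0,A1,A2,A3))))))
        (𝓝[≠] 0)
        (𝓝 (((-(X + A0/Y + 1/Y^2), -Y, I*Z, W/I, -T),
              (-A0, A1+A0, A2, A3)) : StC3))) ∧
    (X ≠ 0 →
      Tendsto
        (fun δ : ℂ =>
          PhiInv (δ * (1 - A1*δ^2) ^ (-(1:ℂ)/2))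
            (s2A7 (Phi δ ((X,Y,Z,W,T),(A0,A1,A2,A3)))))
        (𝓝[≠] 0)
        (𝓝 (((X, Y - A1/X, Z, W, T), (A0+2*A1, -A1, A2+A1, A3)) : StC3))) ∧
    (Y + W^2 - T ≠ 0 →
      Tendsto
        (fun δ : ℂ =>
          PhiInv δ (s3A7 (Phi δ ((X,Y,Z,W,T),(A0,A1,A2,A3)))))
        (𝓝[≠] 0)
        (𝓝 (((X + A2/(Y + W^2 - T), Y, Z + 2*A2*W/(Y + W^2 - T), W, T),
              (A0, A1+A2, -A2, A3+2*A2)) : StC3))) ∧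
    (Z ≠ 0 →
      Tendsto
        (fun δ : ℂ =>
          PhiInv δ (s4A7 (Phi δ ((X,Y,Z,W,T),(A0,A1,A2,A3)))))
        (𝓝[≠] 0)
        (𝓝 (((X, Y, Z, W - A3/Z, T), (A0, A1, A2+A3, -A3)) : StC3))) :=
  degeneration_backlund_A7_to_C3_general A0 A1 A2 A3 X Y Z W T
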